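/- arXiv:math/0606121 — 2 statements merged into one kernel-verified Lean document; each statement's English description precedes it below -/
import Mathlib

section
/- Let $A=[a_{ij}]$ be an $n\times n$ matrix over a commutative ring and let $1\le m\le n$. For $i,j=1,\dots,m$ define $c_{ij}$ to be the minor of $A$ corresponding to rows $\{i,m+1,\dots,n\}$ and columns $\{j,m+1,\dots,n\}$, and let $C=[c_{ij}]$ be the resulting $m\times m$ matrix. Let $A_{\mathcal{Q}\mathcal{Q}}$ be the submatrix of $A$ with rows and columns indexed by $\mathcal{Q}=\{m+1,\dots,n\}$. Then $\det C = \det A \cdot (\det A_{\mathcal{Q}\mathcal{Q}})^{m-1}$. -/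
/-!
When the corner block `D = A_QQ` is invertible, expanding each bordered minor along its Schur
complement gives `c_ij = det D * S_ij` with `S = A_PP - A_PQ D⁻¹ A_QP` (`P = {1, …, m}`), so
`det C = (det D)^m det S`, while `det A = det D * det S`. Both sides of the identity are
polynomials in the entries of `A`, and for the generic matrix over `ℤ[x_ij]` the corner
determinant is nonzero, so the invertible case over the fraction field gives the identity
for the generic matrix, hence for every matrix by specialisation.
-/

open Matrix

namespace Matrix

section BorderedMinors

variable {m n R S : Type*} [Fintype n] [DecidableEq n] [CommRing R] [CommRing S]

/-- The matrix `C` of the paper: its `(i, j)` entry is the minor of `A` on the rows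
`{inl i} ∪ range inr` and the columns `{inl j} ∪ range inr`. -/
def borderedMinors (A : Matrix (m ⊕ n) (m ⊕ n) R) : Matrix m m R :=
  of fun i j => (A.submatrix (Sum.map (fun _ : Unit => i) id) (Sum.map (fun _ : Unit => j) id)).det

theorem borderedMinors_map (A : Matrix (m ⊕ n) (m ⊕ n) R) (f : R →+* S) :
    (A.map f).borderedMinors = A.borderedMinors.map f := by
  ext i j
  simp only [borderedMinors, of_apply, map_apply, RingHom.map_det, RingHom.mapMatrix_apply,
    submatrix_map]

theorem borderedMinors_eq_smul_schur (A : Matrix (m ⊕ n) (m ⊕ n) R) [Invertible A.toBlocks₂₂] :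
    A.borderedMinors =
      A.toBlocks₂₂.det • (A.toBlocks₁₁ - A.toBlocks₁₂ * ⅟A.toBlocks₂₂ * A.toBlocks₂₁) := by
  ext i j
  have hblocks : A.submatrix (Sum.map (fun _ : Unit => i) id) (Sum.map (fun _ : Unit => j) id) =
      fromBlocks (of fun _ _ : Unit => A (.inl i) (.inl j))
        (of fun (_ : Unit) b => A (.inl i) (.inr b))
        (of fun a (_ : Unit) => A (.inr a) (.inl j)) A.toBlocks₂₂ := by
    ext (_ | a) (_ | b) <;> rfl
  rw [borderedMinors, of_apply, hblocks, det_fromBlocks₂₂, det_unique (n := Unit)]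
  simp [mul_apply, toBlocks₁₁, toBlocks₁₂, toBlocks₂₁]

theorem det_toBlocks₂₂_mvPolynomialX_ne_zero :
    (mvPolynomialX (m ⊕ n) (m ⊕ n) ℤ).toBlocks₂₂.det ≠ 0 := by
  have hrename : (mvPolynomialX (m ⊕ n) (m ⊕ n) ℤ).toBlocks₂₂ =
      (mvPolynomialX n n ℤ).map (MvPolynomial.rename (Prod.map Sum.inr Sum.inr)) := by
    ext a b
    simp [toBlocks₂₂]
  rw [hrename, ← AlgHom.mapMatrix_apply, ← AlgHom.map_det]
  exact (map_ne_zero_iff _ (MvPolynomial.rename_injective _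
    (Sum.inr_injective.prodMap Sum.inr_injective))).mpr (det_mvPolynomialX_ne_zero n ℤ)

variable [Fintype m] [DecidableEq m]

theorem map_det_borderedMinors (f : R →+* S) (A : Matrix (m ⊕ n) (m ⊕ n) R) :
    f A.borderedMinors.det = (A.map f).borderedMinors.det := by
  rw [borderedMinors_map, RingHom.map_det, RingHom.mapMatrix_apply]

theorem map_det_mul_det_toBlocks₂₂_pow (f : R →+* S) (A : Matrix (m ⊕ n) (m ⊕ n) R) (e : ℕ) :
    f (A.det * A.toBlocks₂₂.det ^ e) = (A.map f).det * (A.map f).toBlocks₂₂.det ^ e := by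
  rw [map_mul, map_pow, RingHom.map_det f A, RingHom.map_det f A.toBlocks₂₂]
  rfl

theorem det_borderedMinors_of_invertible [Nonempty m] (A : Matrix (m ⊕ n) (m ⊕ n) R)
    [Invertible A.toBlocks₂₂] :
    A.borderedMinors.det = A.det * A.toBlocks₂₂.det ^ (Fintype.card m - 1) := by
  have hA : A.det = A.toBlocks₂₂.det *
      (A.toBlocks₁₁ - A.toBlocks₁₂ * ⅟A.toBlocks₂₂ * A.toBlocks₂₁).det := by
    rw [← det_fromBlocks₂₂, fromBlocks_toBlocks]
  obtain ⟨c, hc⟩ := Nat.exists_eq_succ_of_ne_zero (Fintype.card_ne_zero (α := m))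
  rw [borderedMinors_eq_smul_schur, det_smul, hA, hc, Nat.succ_sub_one, pow_succ]
  ring

theorem det_borderedMinors_of_det_ne_zero [IsDomain R] [Nonempty m]
    (A : Matrix (m ⊕ n) (m ⊕ n) R) (hA : A.toBlocks₂₂.det ≠ 0) :
    A.borderedMinors.det = A.det * A.toBlocks₂₂.det ^ (Fintype.card m - 1) := by
  let φ := algebraMap R (FractionRing R)
  have hφ : Function.Injective φ := IsFractionRing.injective R (FractionRing R)
  have : Invertible (A.map φ).toBlocks₂₂ := by
    refine invertibleOfIsUnitDet _ (isUnit_iff_ne_zero.mpr ?_)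
    have h := (map_ne_zero_iff φ hφ).mpr hA
    rwa [RingHom.map_det] at h
  apply hφ
  rw [map_det_borderedMinors, map_det_mul_det_toBlocks₂₂_pow, det_borderedMinors_of_invertible]

theorem det_borderedMinors [Nonempty m] (A : Matrix (m ⊕ n) (m ⊕ n) R) :
    A.borderedMinors.det = A.det * A.toBlocks₂₂.det ^ (Fintype.card m - 1) := by
  let ψ : MvPolynomial ((m ⊕ n) × (m ⊕ n)) ℤ →+* R :=
    (MvPolynomial.aeval fun p : (m ⊕ n) × (m ⊕ n) => A p.1 p.2).toRingHom
  have hψ : (mvPolynomialX (m ⊕ n) (m ⊕ n) ℤ).map ψ = A := mvPolynomialX_mapMatrix_aeval ℤ A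
  rw [← hψ, ← map_det_borderedMinors, ← map_det_mul_det_toBlocks₂₂_pow,
    det_borderedMinors_of_det_ne_zero _ det_toBlocks₂₂_mvPolynomialX_ne_zero]

end BorderedMinors

section Fin

variable {α R : Type*} [CommRing R] {m k : ℕ}

theorem toBlocks₂₂_submatrix_finSumFinEquiv (A : Matrix (Fin (m + k)) (Fin (m + k)) α) :
    (A.submatrix finSumFinEquiv finSumFinEquiv).toBlocks₂₂ =
      A.submatrix (Fin.natAdd m) (Fin.natAdd m) := by
  ext a b
  simp [toBlocks₂₂]

theorem borderedMinors_submatrix_finSumFinEquiv (A : Matrix (Fin (m + k)) (Fin (m + k)) R) :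
    (A.submatrix finSumFinEquiv finSumFinEquiv).borderedMinors =
      of fun i j => (A.submatrix (Fin.cons (Fin.castAdd k i) (Fin.natAdd m))
        (Fin.cons (Fin.castAdd k j) (Fin.natAdd m))).det := by
  let e : Fin (k + 1) ≃ Unit ⊕ Fin k :=
    (finSuccEquiv k).trans ((Equiv.optionEquivSumPUnit _).trans (Equiv.sumComm _ _))
  have he (i : Fin m) : finSumFinEquiv ∘ Sum.map (fun _ : Unit => i) id ∘ e =
      Fin.cons (Fin.castAdd k i) (Fin.natAdd m) := by
    ext x
    refine Fin.cases ?_ (fun b => ?_) x <;> simp [e]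
  ext i j
  rw [borderedMinors, of_apply, of_apply, ← det_submatrix_equiv_self e, submatrix_submatrix,
    submatrix_submatrix, he, he]

end Fin

end Matrix

/-- Classical Sylvester determinant identity.  Here `n = m + k`,
`c i j` is the minor of `A` on rows `{i, m+1, …, n}` and columns
`{j, m+1, …, n}`, and `A_QQ` is the submatrix on rows and columns
`Q = {m+1, …, n}`.  Then `det C = det A * (det A_QQ)^(m-1)`. -/
theorem sylvester_determinant_identity {R : Type*} [CommRing R] (m k : ℕ)
    (hm : 1 ≤ m) (A : Matrix (Fin (m + k)) (Fin (m + k)) R) :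
    (Matrix.of fun i j : Fin m =>
        (A.submatrix (Fin.cons (Fin.castAdd k i) (fun b : Fin k => Fin.natAdd m b))
          (Fin.cons (Fin.castAdd k j) (fun b : Fin k => Fin.natAdd m b))).det).det =
    A.det * ((A.submatrix (Fin.natAdd m) (Fin.natAdd m)).det) ^ (m - 1) := by
  have : Nonempty (Fin m) := ⟨⟨0, hm⟩⟩
  rw [← borderedMinors_submatrix_finSumFinEquiv, det_borderedMinors, det_submatrix_equiv_self,
    toBlocks₂₂_submatrix_finSumFinEquiv, Fintype.card_fin]
end

section
/- Let $l$ be a positive integer, let $\alpha_1,\dots,\alpha_l$ be distinct elements of a field, and for each $i$ set $e_{ri}=e_r(\alpha_1,\dots,\widehat{\alpha_i},\dots,\alpha_l)$, the $r$-th elementary symmetric polynomial in the variables with $\alpha_i$ omitted. Let $1\le p\le l$ and let $\mathcal{E}$ be the $p\times l$ matrix with entries $\mathcal{E}_{r+1,i}=e_{ri}$ for $0\le r\le p-1$. Then every $p\times p$ minor of $\mathcal{E}$ is nonzero. -/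
/-!
Write `e_r` for the elementary symmetric functions of all the `α_j` and `e_r⁽ⁱ⁾` for those with
`α_i` omitted. Comparing coefficients in `∏_j (1 + α_j X) = (1 + α_i X) ∏_{j ≠ i} (1 + α_j X)`
gives `e_r⁽ⁱ⁾ = ∑_{k ≤ r} e_{r-k} (-α_i)^k`. Hence the minor on the columns `c` factors as the
lower unitriangular matrix `(e_{r-k})` times the transposed Vandermonde matrix of the `-α_{c a}`,
so it equals a Vandermonde determinant, which is nonzero because the `α_{c a}` are distinct.
-/

namespace Multiset

variable {R : Type*} [CommRing R]

theorem esymm_cons_succ (a : R) (s : Multiset R) (n : ℕ) :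
    (a ::ₘ s).esymm (n + 1) = s.esymm (n + 1) + a * s.esymm n := by
  simp [esymm, powersetCard_cons, map_map, prod_cons, sum_map_mul_left]

theorem esymm_eq_sum_esymm_cons_mul_neg_pow (a : R) (s : Multiset R) (r : ℕ) :
    s.esymm r = ∑ k ∈ Finset.range (r + 1), (a ::ₘ s).esymm (r - k) * (-a) ^ k := by
  induction r with
  | zero => simp [esymm]
  | succ r ih =>
    rw [Finset.sum_range_succ', Nat.sub_zero, pow_zero, mul_one, esymm_cons_succ]
    have shift : ∑ k ∈ Finset.range (r + 1),
        (a ::ₘ s).esymm (r + 1 - (k + 1)) * (-a) ^ (k + 1) = -a * s.esymm r := by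
      rw [ih, Finset.mul_sum]
      exact Finset.sum_congr rfl fun k _ => by rw [Nat.add_sub_add_right]; ring
    rw [shift]; ring

end Multiset

namespace Matrix

variable {R : Type*} [CommRing R]

theorem det_esymm_eq_det_vandermonde_neg {p : ℕ} (S : Multiset R) (x : Fin p → R)
    (t : Fin p → Multiset R) (hS : ∀ a, x a ::ₘ t a = S) :
    (of fun r a : Fin p => (t a).esymm r).det = (vandermonde fun a => -x a).det := by
  let A : Matrix (Fin p) (Fin p) R := of fun r k => if (k : ℕ) ≤ r then S.esymm (r - k) else 0
  have hA : A.det = 1 := by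
    rw [det_of_isLowerTriangular A fun r k hrk => if_neg (not_le.2 hrk)]
    exact Finset.prod_eq_one fun r _ => by simp [A, Multiset.esymm]
  have factor : (of fun r a : Fin p => (t a).esymm r) = A * (vandermonde fun a => -x a)ᵀ := by
    ext r a
    simp only [of_apply, mul_apply, transpose_apply, vandermonde_apply, A]
    rw [Multiset.esymm_eq_sum_esymm_cons_mul_neg_pow (x a), hS a,
      Fin.sum_univ_eq_sum_range (fun k => (if k ≤ r then S.esymm (r - k) else 0) * (-x a) ^ k),
      ← Finset.sum_subset (Finset.range_subset_range.2 r.is_lt)]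
    · refine Finset.sum_congr rfl fun k hk => ?_
      rw [if_pos (Nat.lt_succ_iff.1 (Finset.mem_range.1 hk))]
    · intro k _ hk
      rw [if_neg fun h => hk (Finset.mem_range.2 (Nat.lt_succ_iff.2 h)), zero_mul]
  rw [factor, det_mul, hA, one_mul, det_transpose]

end Matrix

theorem esymm_minor_ne_zero_general {F : Type*} [Field F] (l p : ℕ)
    (α : Fin l → F) (hα : Function.Injective α)
    (c : Fin p → Fin l) (hc : Function.Injective c) :
    (Matrix.of fun r a : Fin p =>
        ∑ t ∈ (Finset.univ.erase (c a)).powersetCard (r : ℕ), ∏ i ∈ t, α i).det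
      ≠ 0 := by
  have minor_eq : (Matrix.of fun r a : Fin p =>
      ∑ t ∈ (Finset.univ.erase (c a)).powersetCard (r : ℕ), ∏ i ∈ t, α i).det
      = (Matrix.vandermonde fun a => -α (c a)).det := by
    simp only [← Finset.esymm_map_val]
    refine Matrix.det_esymm_eq_det_vandermonde_neg (Finset.univ.val.map α) _ _ fun a => ?_
    rw [← Multiset.map_cons, Finset.erase_val, Multiset.cons_erase (Finset.mem_univ _)]
  rw [minor_eq, Matrix.det_vandermonde_ne_zero_iff]
  exact fun a b hab => hc (hα (neg_injective hab))

/-- Every `p × p` minor of the matrix `E` with entries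
`E_{r i} = e_r(α₁, …, α̂ᵢ, …, α_l)` (elementary symmetric polynomials with
`αᵢ` omitted, rows `r = 0, …, p-1`) is nonzero, provided the `αᵢ` are
distinct. -/
theorem esymm_minor_ne_zero {F : Type*} [Field F] (l p : ℕ) (hl : 1 ≤ l)
    (hp : 1 ≤ p) (hpl : p ≤ l) (α : Fin l → F) (hα : Function.Injective α)
    (c : Fin p → Fin l) (hc : Function.Injective c) :
    (Matrix.of fun r a : Fin p =>
        ∑ t ∈ (Finset.univ.erase (c a)).powersetCard (r : ℕ), ∏ i ∈ t, α i).det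
      ≠ 0 :=
  esymm_minor_ne_zero_general l p α hα c hc
end
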